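/- arXiv:1807.05743 — 2 statements merged into one kernel-verified Lean document; each statement's English description precedes it below -/
import Mathlib

section
/- If I and J are copolar monomial ideals, then their lcm-lattices are isomorphic as partially ordered sets: there is an order isomorphism lcm(I) → lcm(J) sending, for each subset A of G(I), the monomial lcm(m : m ∈ A) to lcm(m' : m' ∈ A'), where A' is the subset of G(J) corresponding to A under the variable bijection between the polarizations. -/
/-- The polarization of the monomial `x^μ` (with `μ_i ≤ a_i`) with respect to `a`,
viewed as a squarefree monomial in the variables `x_{i,j}`, identified with the set of
variables dividing it. -/
def polarSet {n : ℕ} (a : Fin n → ℕ) (μ : Fin n → ℕ) : Set (Σ i : Fin n, Fin (a i)) :=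
  {p | (p.2 : ℕ) < μ p.1}

lemma polarSet_mono {n : ℕ} (a : Fin n → ℕ) {μ ν : Fin n → ℕ} (h : μ ≤ ν) :
    polarSet a μ ⊆ polarSet a ν := fun p hp => lt_of_lt_of_le hp (h p.1)

lemma le_of_polarSet_subset {n : ℕ} {a μ ν : Fin n → ℕ} (hμ : μ ≤ a)
    (h : polarSet a μ ⊆ polarSet a ν) : μ ≤ ν := by
  intro i
  rcases Nat.eq_zero_or_pos (μ i) with h0 | h0
  · simp [h0]
  · have hlt : μ i - 1 < a i := lt_of_lt_of_le (Nat.sub_lt h0 Nat.one_pos) (hμ i)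
    have hm : (⟨i, ⟨μ i - 1, hlt⟩⟩ : Σ i, Fin (a i)) ∈ polarSet a μ :=
      Nat.sub_lt h0 Nat.one_pos
    exact Nat.le_of_pred_lt (h hm)

lemma polarSet_sup {n : ℕ} (a : Fin n → ℕ) (A : Finset (Fin n → ℕ)) :
    polarSet a (fun i => A.sup (fun μ => μ i)) = ⋃ μ ∈ A, polarSet a μ := by
  ext p
  simp [polarSet, Finset.lt_sup_iff]

/-- The lcm-lattice of a monomial ideal with minimal monomial generating set `G`
(monomials identified with exponent vectors): the set of monomials `lcm (m : m ∈ A)` for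
`A ⊆ G` (lcm = componentwise `sup` of exponent vectors), partially ordered by
divisibility, i.e. by the componentwise (product) order on exponent vectors. -/
abbrev LcmLattice {n : ℕ} (G : Finset (Fin n → ℕ)) : Type :=
  {f : Fin n → ℕ // ∃ A : Finset (Fin n → ℕ), ↑A ⊆ (↑G : Set (Fin n → ℕ)) ∧
    f = fun i => A.sup (fun μ => μ i)}

lemma lcm_bound {n : ℕ} {G : Finset (Fin n → ℕ)} {a : Fin n → ℕ}
    (ha : ∀ i, a i = G.sup (fun μ => μ i)) (x : LcmLattice G) : x.val ≤ a := by
  obtain ⟨f, A, hA, rfl⟩ := x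
  intro i
  rw [ha i]
  exact Finset.sup_mono (Finset.coe_subset.mp hA)

section Main

variable {nI nJ : ℕ} {GI : Finset (Fin nI → ℕ)} {GJ : Finset (Fin nJ → ℕ)}
  {aI : Fin nI → ℕ} {aJ : Fin nJ → ℕ}
  {φ : (Σ i : Fin nI, Fin (aI i)) ≃ (Σ j : Fin nJ, Fin (aJ j))}

/-- Union description of the φ-image of a polarized lcm. -/
lemma key_union
    (hφ : (fun μ => φ '' polarSet aI μ) '' ↑GI = polarSet aJ '' ↑GJ)
    (A : Finset (Fin nI → ℕ)) (hA : ↑A ⊆ (↑GI : Set (Fin nI → ℕ))) :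
    ∃ B : Finset (Fin nJ → ℕ), ↑B ⊆ (↑GJ : Set (Fin nJ → ℕ)) ∧
      φ '' polarSet aI (fun i => A.sup (fun μ => μ i))
        = polarSet aJ (fun j => B.sup (fun ν => ν j)) := by
  classical
  refine ⟨GJ.filter (fun ν => ∃ μ ∈ A, φ '' polarSet aI μ = polarSet aJ ν),
    by intro x hx; rw [Finset.mem_coe, Finset.mem_filter] at hx; exact hx.1, ?_⟩
  rw [polarSet_sup, polarSet_sup, Set.image_iUnion₂]
  ext p
  simp only [Set.mem_iUnion, Finset.mem_filter]
  constructor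
  · rintro ⟨μ, hμA, hp⟩
    have hμG : μ ∈ GI := hA hμA
    have : φ '' polarSet aI μ ∈ polarSet aJ '' (↑GJ : Set (Fin nJ → ℕ)) := by
      rw [← hφ]; exact ⟨μ, hμG, rfl⟩
    obtain ⟨ν, hνG, hν⟩ := this
    exact ⟨ν, ⟨hνG, μ, hμA, hν.symm⟩, hν ▸ hp⟩
  · rintro ⟨ν, ⟨hνG, μ, hμA, hν⟩, hp⟩
    exact ⟨μ, hμA, hν ▸ hp⟩

/-- Same in the reverse direction. -/
lemma key_union' 
    (hφ : (fun μ => φ '' polarSet aI μ) '' ↑GI = polarSet aJ '' ↑GJ)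
    (B : Finset (Fin nJ → ℕ)) (hB : ↑B ⊆ (↑GJ : Set (Fin nJ → ℕ))) :
    ∃ A : Finset (Fin nI → ℕ), ↑A ⊆ (↑GI : Set (Fin nI → ℕ)) ∧
      φ '' polarSet aI (fun i => A.sup (fun μ => μ i))
        = polarSet aJ (fun j => B.sup (fun ν => ν j)) := by
  classical
  refine ⟨GI.filter (fun μ => ∃ ν ∈ B, φ '' polarSet aI μ = polarSet aJ ν),
    by intro x hx; rw [Finset.mem_coe, Finset.mem_filter] at hx; exact hx.1, ?_⟩
  rw [polarSet_sup, polarSet_sup, Set.image_iUnion₂]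
  ext p
  simp only [Set.mem_iUnion, Finset.mem_filter]
  constructor
  · rintro ⟨μ, ⟨hμG, ν, hνB, hν⟩, hp⟩
    exact ⟨ν, hνB, hν ▸ hp⟩
  · rintro ⟨ν, hνB, hp⟩
    have : polarSet aJ ν ∈ (fun μ => φ '' polarSet aI μ) '' (↑GI : Set (Fin nI → ℕ)) := by
      rw [hφ]; exact ⟨ν, hB hνB, rfl⟩
    obtain ⟨μ, hμG, hμ⟩ := this
    have hμ2 : φ '' polarSet aI μ = polarSet aJ ν := hμ
    exact ⟨μ, ⟨hμG, ν, hνB, hμ2⟩, hμ2.symm ▸ hp⟩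

end Main

/-- Let `I` and `J` be copolar monomial ideals, with minimal monomial
generating sets `GI`, `GJ` and maximal exponent vectors `aI`, `aJ`; copolarity is
witnessed by the variable bijection `φ` between the polarized ambient rings, whose
induced substitution maps `G(I^P)` (the polarizations of the elements of `GI`) onto
`G(J^P)`.  Then the lcm-lattices of `I` and `J` are isomorphic as posets: there is an
order isomorphism `ψ : lcm(I) ≃o lcm(J)` sending, for every `A ⊆ G(I)`, the monomial
`lcm (m : m ∈ A)` to `lcm (m' : m' ∈ B)`, where `B ⊆ G(J)` corresponds to `A` under the
variable bijection `φ` (i.e. `φ` maps the polarizations of the elements of `A` exactly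
onto the polarizations of the elements of `B`). -/
theorem copolar_lcm_lattice_iso (nI nJ : ℕ)
    (GI : Finset (Fin nI → ℕ)) (GJ : Finset (Fin nJ → ℕ))
    (hGI : ∀ μ ∈ GI, ∀ ν ∈ GI, (∀ i, μ i ≤ ν i) → μ = ν)
    (hGJ : ∀ μ ∈ GJ, ∀ ν ∈ GJ, (∀ j, μ j ≤ ν j) → μ = ν)
    (aI : Fin nI → ℕ) (haI : ∀ i, aI i = GI.sup (fun μ => μ i))
    (aJ : Fin nJ → ℕ) (haJ : ∀ j, aJ j = GJ.sup (fun μ => μ j))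
    (φ : (Σ i : Fin nI, Fin (aI i)) ≃ (Σ j : Fin nJ, Fin (aJ j)))
    (hφ : (fun μ => φ '' polarSet aI μ) '' ↑GI = polarSet aJ '' ↑GJ) :
    ∃ ψ : LcmLattice GI ≃o LcmLattice GJ,
      ∀ (A : Finset (Fin nI → ℕ)) (hA : ↑A ⊆ (↑GI : Set (Fin nI → ℕ)))
        (B : Finset (Fin nJ → ℕ)) (hB : ↑B ⊆ (↑GJ : Set (Fin nJ → ℕ))),
        (fun μ => φ '' polarSet aI μ) '' ↑A = polarSet aJ '' ↑B →
        ψ ⟨fun i => A.sup (fun μ => μ i), A, hA, rfl⟩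
          = ⟨fun j => B.sup (fun μ => μ j), B, hB, rfl⟩ := by
  classical
  -- uniqueness from polarization, both sides
  have huniqI : ∀ x x' : LcmLattice GI, polarSet aI x.val = polarSet aI x'.val → x = x' :=
    fun x x' h => Subtype.ext (le_antisymm
      (le_of_polarSet_subset (lcm_bound haI x) h.le)
      (le_of_polarSet_subset (lcm_bound haI x') h.ge))
  have huniqJ : ∀ y y' : LcmLattice GJ, polarSet aJ y.val = polarSet aJ y'.val → y = y' :=
    fun y y' h => Subtype.ext (le_antisymm
      (le_of_polarSet_subset (lcm_bound haJ y) h.le)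
      (le_of_polarSet_subset (lcm_bound haJ y') h.ge))
  -- forward map
  have keyF : ∀ x : LcmLattice GI, ∃ y : LcmLattice GJ,
      φ '' polarSet aI x.val = polarSet aJ y.val := by
    rintro ⟨f, A, hA, rfl⟩
    obtain ⟨B, hB, hBeq⟩ := key_union hφ A hA
    exact ⟨⟨_, B, hB, rfl⟩, hBeq⟩
  have keyG : ∀ y : LcmLattice GJ, ∃ x : LcmLattice GI,
      φ '' polarSet aI x.val = polarSet aJ y.val := by
    rintro ⟨g, B, hB, rfl⟩
    obtain ⟨A, hA, hAeq⟩ := key_union' hφ B hB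
    exact ⟨⟨_, A, hA, rfl⟩, hAeq⟩
  set F : LcmLattice GI → LcmLattice GJ := fun x => (keyF x).choose with hF
  have PF : ∀ x, φ '' polarSet aI x.val = polarSet aJ (F x).val := fun x => (keyF x).choose_spec
  set G : LcmLattice GJ → LcmLattice GI := fun y => (keyG y).choose with hG
  have PG : ∀ y, φ '' polarSet aI (G y).val = polarSet aJ y.val := fun y => (keyG y).choose_spec
  have himginj : ∀ s t : Set (Σ i : Fin nI, Fin (aI i)), φ '' s = φ '' t → s = t :=
    fun s t h => Set.image_injective.mpr φ.injective h
  have hleft : Function.LeftInverse G F := by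
    intro x
    apply huniqI
    apply himginj
    rw [PG (F x), PF x]
  have hright : Function.RightInverse G F := by
    intro y
    apply huniqJ
    rw [← PF (G y), PG y]
  have hmapiff : ∀ x x' : LcmLattice GI, F x ≤ F x' ↔ x ≤ x' := by
    intro x x'
    constructor
    · intro h
      have h1 : polarSet aJ (F x).val ⊆ polarSet aJ (F x').val := polarSet_mono aJ h
      rw [← PF x, ← PF x'] at h1
      exact le_of_polarSet_subset (lcm_bound haI x)
        ((Set.image_subset_image_iff φ.injective).mp h1)
    · intro h
      have h1 : φ '' polarSet aI x.val ⊆ φ '' polarSet aI x'.val :=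
        Set.image_mono (polarSet_mono aI h)
      rw [PF x, PF x'] at h1
      exact le_of_polarSet_subset (lcm_bound haJ (F x)) h1
  refine ⟨⟨⟨F, G, hleft, hright⟩, hmapiff _ _⟩, ?_⟩
  intro A hA B hB hAB
  apply huniqJ
  show polarSet aJ (F _).val = _
  rw [← PF ⟨fun i => A.sup (fun μ => μ i), A, hA, rfl⟩]
  show φ '' polarSet aI (fun i => A.sup (fun μ => μ i)) = _
  rw [polarSet_sup, polarSet_sup, Set.image_iUnion₂]
  ext p
  simp only [Set.mem_iUnion]
  constructor
  · rintro ⟨μ, hμA, hp⟩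
    have : φ '' polarSet aI μ ∈ polarSet aJ '' (↑B : Set (Fin nJ → ℕ)) := by
      rw [← hAB]; exact ⟨μ, hμA, rfl⟩
    obtain ⟨ν, hνB, hν⟩ := this
    exact ⟨ν, hνB, hν ▸ hp⟩
  · rintro ⟨ν, hνB, hp⟩
    have : polarSet aJ ν ∈ (fun μ => φ '' polarSet aI μ) '' (↑A : Set (Fin nI → ℕ)) := by
      rw [hAB]; exact ⟨ν, hνB, rfl⟩
    obtain ⟨μ, hμA, hμ⟩ := this
    have hμ2 : φ '' polarSet aI μ = polarSet aJ ν := hμ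
    exact ⟨μ, hμA, hμ2.symm ▸ hp⟩
end

section
/- Consider the squarefree monomial ideal 𝓜 = ⟨x_{12}x_{13}x_{14}, x_{21}x_{24}, x_{31}x_{34}, x_{13}x_{14}x_{24}, x_{12}x_{14}x_{34}, x_{14}x_{24}x_{34}⟩ in k[x_{12},x_{13},x_{14},x_{21},x_{24},x_{31},x_{34}], and the monomial ideals M = ⟨x_1^3, x_2^2, x_3^2, x_1^2x_2, x_2^2x_3, x_1x_2x_3⟩ ⊆ k[x_1,x_2,x_3] and 𝓞 = ⟨x_{12}x_{13}x_{14}, x_{12}x_{24}, x_{13}x_{34}, x_{13}x_{14}x_{24}, x_{12}x_{14}x_{34}, x_{14}x_{24}x_{34}⟩ ⊆ k[x_{12},x_{13},x_{14},x_{24},x_{34}]. Then neither M nor 𝓞 is a depolarization of 𝓜: there is no bijection from the variables of the ambient ring of 𝓜 to the variables of the ambient ring of M^P (respectively 𝓞^P) whose induced substitution maps the minimal monomial generating set of 𝓜 onto that of M^P (respectively 𝓞^P). -/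
/-- The minimal generating set of the squarefree monomial ideal
`𝓜 = ⟨x₁₂x₁₃x₁₄, x₂₁x₂₄, x₃₁x₃₄, x₁₃x₁₄x₂₄, x₁₂x₁₄x₃₄, x₁₄x₂₄x₃₄⟩` in `7` variables,
with the variables `x₁₂, x₁₃, x₁₄, x₂₁, x₂₄, x₃₁, x₃₄` indexed by `0,…,6` and squarefree
monomials identified with their supports. -/
def gensM' : Finset (Finset (Fin 7)) :=
  {{0, 1, 2}, {3, 4}, {5, 6}, {1, 2, 4}, {0, 2, 6}, {2, 4, 6}}

/-- The minimal generating set of `M = ⟨x₁³, x₂², x₃², x₁²x₂, x₂²x₃, x₁x₂x₃⟩` in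
`k[x₁,x₂,x₃]`, monomials recorded by exponent vectors. -/
def gensM : Finset (Fin 3 → ℕ) :=
  {![3, 0, 0], ![0, 2, 0], ![0, 0, 2], ![2, 1, 0], ![0, 2, 1], ![1, 1, 1]}

/-- The minimal generating set of the squarefree monomial ideal
`𝓞 = ⟨x₁₂x₁₃x₁₄, x₁₂x₂₄, x₁₃x₃₄, x₁₃x₁₄x₂₄, x₁₂x₁₄x₃₄, x₁₄x₂₄x₃₄⟩` in `5` variables,
with the variables `x₁₂, x₁₃, x₁₄, x₂₄, x₃₄` indexed by `0,…,4`, monomials recorded by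
(squarefree) exponent vectors. -/
def gensO : Finset (Fin 5 → ℕ) :=
  {![1, 1, 1, 0, 0], ![1, 0, 0, 1, 0], ![0, 1, 0, 0, 1], ![0, 1, 1, 1, 0],
    ![1, 0, 1, 0, 1], ![0, 0, 1, 1, 1]}

/-- The maximal exponent vector of `M`. -/
def aM : Fin 3 → ℕ := fun i => gensM.sup (fun μ => μ i)

/-- The maximal exponent vector of `𝓞`. -/
def aO : Fin 5 → ℕ := fun j => gensO.sup (fun μ => μ j)


/-- The polarization of `μ` as a `Finset`. -/
def polarFinset (μ : Fin 3 → ℕ) : Finset (Σ i : Fin 3, Fin (aM i)) :=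
  Finset.univ.filter (fun p => (p.2 : ℕ) < μ p.1)

lemma polarSet_eq_coe (μ : Fin 3 → ℕ) : polarSet aM μ = ↑(polarFinset μ) := by
  ext p; simp [polarSet, polarFinset]

/-- The number of generators that meet at least two other generators in at least two
variables: an invariant of the generating set under relabeling of variables. -/
def inv2 {α : Type*} [DecidableEq α] (G : Finset (Finset α)) : ℕ :=
  (G.filter (fun s => 2 ≤ (G.filter (fun t => t ≠ s ∧ 2 ≤ (s ∩ t).card)).card)).card

lemma inv2_image {α β : Type*} [DecidableEq α] [DecidableEq β] (G : Finset (Finset α))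
    (φ : α → β) (hφ : Function.Injective φ) :
    inv2 (G.image (fun s => s.image φ)) = inv2 G := by
  have he : Function.Injective (fun s : Finset α => s.image φ) :=
    Finset.image_injective hφ
  have hcard : ∀ s t : Finset α, (s.image φ ∩ t.image φ).card = (s ∩ t).card := by
    intro s t
    rw [← Finset.image_inter _ _ hφ, Finset.card_image_of_injective _ hφ]
  have hinner : ∀ s : Finset α,
      ((G.image (fun s => s.image φ)).filter
        (fun t => t ≠ s.image φ ∧ 2 ≤ (s.image φ ∩ t).card)).card =
      (G.filter (fun t => t ≠ s ∧ 2 ≤ (s ∩ t).card)).card := by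
    intro s
    rw [Finset.filter_image, Finset.card_image_of_injective _ he]
    congr 1
    ext t
    simp only [he.ne_iff, hcard]
  unfold inv2
  rw [Finset.filter_image, Finset.card_image_of_injective _ he]
  congr 1
  ext s
  simp only [hinner]

/-- Neither `M` nor `𝓞` is a depolarization of `𝓜`: there is no
bijection from the variables of the ambient ring of `𝓜` to the variables of the ambient
ring of `M^P` (respectively `𝓞^P`) whose induced substitution maps the minimal monomial
generating set of `𝓜` onto that of `M^P` (respectively `𝓞^P`); here
`G(M^P)` (resp. `G(𝓞^P)`) is the set of polarizations of the elements of `G(M)`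
(resp. `G(𝓞)`) with respect to the componentwise maximal exponent vector. -/
theorem M_and_O_are_not_depolarizations_of_M' :
    (¬ ∃ φ : Fin 7 ≃ (Σ i : Fin 3, Fin (aM i)),
      (fun s : Finset (Fin 7) => φ '' ↑s) '' ↑gensM' = polarSet aM '' ↑gensM) ∧
    (¬ ∃ ψ : Fin 7 ≃ (Σ j : Fin 5, Fin (aO j)),
      (fun s : Finset (Fin 7) => ψ '' ↑s) '' ↑gensM' = polarSet aO '' ↑gensO) := by
  constructor
  · rintro ⟨φ, h⟩
    have hfin : gensM'.image (fun s => s.image φ) = gensM.image polarFinset := by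
      apply Finset.coe_injective
      apply Set.image_injective.mpr
        (Finset.coe_injective :
          Function.Injective (SetLike.coe (A := Finset (Σ i : Fin 3, Fin (aM i)))))
      have e1 : (fun s : Finset (Fin 7) => (φ : Fin 7 → _) '' ↑s)
          = (SetLike.coe ∘ fun s => s.image φ) := by
        funext s; simp [Finset.coe_image]
      have e2 : polarSet aM = (SetLike.coe ∘ polarFinset) := by
        funext μ; exact polarSet_eq_coe μ
      rw [e1, e2, Set.image_comp, Set.image_comp] at h
      rw [Finset.coe_image, Finset.coe_image]
      exact h
    have h1 : inv2 (gensM'.image (fun s => s.image φ)) = inv2 gensM' :=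
      inv2_image gensM' φ φ.injective
    rw [hfin] at h1
    have h2 : inv2 (gensM.image polarFinset) = 3 := by decide
    have h3 : inv2 gensM' = 4 := by decide
    rw [h2, h3] at h1
    exact absurd h1 (by norm_num)
  · rintro ⟨ψ, -⟩
    have := Fintype.card_congr ψ
    exact absurd this (by decide)
end
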